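/- For every pair of integers n, m, the class of the matrix [[1, n + m·ω], [0, 1]] lies in Γ₃ (the full lattice of parabolic translations fixing ∞ belongs to Γ(5,2,2,3,3,3)). -/

import Mathlib

/-!
Setup: `PSL(2,ℂ)` as the quotient of `SL(2,ℂ)` by its center, the constants
`u = (1+√5)/2`, `ω = (1+√(-3))/2 = (1+√3·i)/2`, and the generators of the
tetrahedral groups of Neumann–Reid.
-/

noncomputable section

abbrev SL2C := Matrix.SpecialLinearGroup (Fin 2) ℂ

/-- `PSL(2,ℂ)`, the quotient of `SL(2,ℂ)` by its center `{±I}`. -/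
abbrev PSL2C := SL2C ⧸ Subgroup.center SL2C

/-- The projection `SL(2,ℂ) → PSL(2,ℂ)`, `A ↦ [A]`. -/
def pr : SL2C →* PSL2C := QuotientGroup.mk' _

def u : ℂ := ((1 + Real.sqrt 5) / 2 : ℝ)
def ω : ℂ := (1 + Real.sqrt 3 * Complex.I) / 2

lemma u_ne : u ≠ 0 := Complex.ofReal_ne_zero.mpr (by positivity)

lemma ω_ne : ω ≠ 0 := by
  unfold ω
  intro h
  rw [div_eq_zero_iff] at h
  rcases h with h | h
  · have := congrArg Complex.re h
    simp at this
  · norm_num at h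

def xSL : SL2C := ⟨!![u, -u⁻¹; u, 0], by
  rw [Matrix.det_fin_two_of]; field_simp [u_ne]; ring⟩

def ySL : SL2C := ⟨!![0, ω * u⁻¹; -ω⁻¹ * u, 0], by
  rw [Matrix.det_fin_two_of]; field_simp [u_ne, ω_ne]; ring⟩

def zSL : SL2C := ⟨!![0, ω ^ 2 * u⁻¹; -(ω ^ 2)⁻¹ * u, 0], by
  rw [Matrix.det_fin_two_of]; field_simp [u_ne, ω_ne]; ring⟩

def x : PSL2C := pr xSL
def y : PSL2C := pr ySL
def z : PSL2C := pr zSL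

/-- The tetrahedral group `Γ(5,2,2,3,3,3)` as a subgroup of `PSL(2,ℂ)`. -/
def Γ₃ : Subgroup PSL2C := Subgroup.closure {x, y, z}

/-!
The translations `t` with `[[1, t], [0, 1]]` in `Γ₃` form an additive subgroup of `ℂ`, so it is
enough to find `t = 1` and `t = ω`. In `SL(2,ℂ)` one computes `x y z y = -[[1, 1], [0, 1]]` and
`x z x y = -[[1, ω], [0, 1]]` (these hold for any `u ≠ 0` and need only `ω³ = -1`), and `-I` is
trivial in `PSL(2,ℂ)`.
-/

open Matrix Matrix.SpecialLinearGroup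

lemma ω_sq : ω ^ 2 = ω - 1 := by
  have h3 : ((Real.sqrt 3 : ℝ) : ℂ) ^ 2 = 3 := mod_cast Real.sq_sqrt (by norm_num)
  unfold ω
  linear_combination (Complex.I ^ 2 / 4 : ℂ) * h3 + (3 / 4 : ℂ) * Complex.I_sq

lemma ω_pow_three : ω ^ 3 = -1 := by
  linear_combination (ω + 1) * ω_sq

lemma Matrix.SpecialLinearGroup.neg_one_mem_center {n R : Type*} [DecidableEq n] [Fintype n]
    [CommRing R] [Fact (Even (Fintype.card n))] :
    (-1 : SpecialLinearGroup n R) ∈ Subgroup.center (SpecialLinearGroup n R) :=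
  mem_center_iff.mpr
    ⟨-1, (Fact.out : Even (Fintype.card n)).neg_one_pow, by rw [coe_neg, coe_one, map_neg, map_one]⟩

lemma pr_neg (A : SL2C) : pr (-A) = pr A := by
  rw [← neg_one_mul, map_mul, pr, QuotientGroup.mk'_apply,
    (QuotientGroup.eq_one_iff _).mpr neg_one_mem_center, one_mul]

def translation (t : ℂ) : SL2C := transvection (zero_ne_one' (Fin 2)) t

lemma coe_translation (t : ℂ) :
    (translation t : Matrix (Fin 2) (Fin 2) ℂ) = !![1, t; 0, 1] := by
  ext i j
  fin_cases i <;> fin_cases j <;> simp [translation, transvection_coe]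

lemma mk_eq_translation (t : ℂ) (h : (!![1, t; 0, 1] : Matrix (Fin 2) (Fin 2) ℂ).det = 1) :
    (⟨!![1, t; 0, 1], h⟩ : SL2C) = translation t :=
  Subtype.ext (coe_translation t).symm

lemma coe_xSL : (xSL : Matrix (Fin 2) (Fin 2) ℂ) = !![u, -u⁻¹; u, 0] := rfl

lemma coe_ySL : (ySL : Matrix (Fin 2) (Fin 2) ℂ) = !![0, ω * u⁻¹; -ω⁻¹ * u, 0] := rfl

lemma coe_zSL : (zSL : Matrix (Fin 2) (Fin 2) ℂ) = !![0, ω ^ 2 * u⁻¹; -(ω ^ 2)⁻¹ * u, 0] := rfl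

lemma xSL_mul_ySL_mul_zSL_mul_ySL : xSL * ySL * zSL * ySL = -translation 1 := by
  have hu := u_ne
  have hω := ω_ne
  ext i j
  simp only [coe_mul, coe_neg, coe_translation, coe_xSL, coe_ySL, coe_zSL, mul_fin_two]
  fin_cases i <;> fin_cases j <;> simp <;> field_simp

lemma xSL_mul_zSL_mul_xSL_mul_ySL : xSL * zSL * xSL * ySL = -translation ω := by
  have hu := u_ne
  have hω := ω_ne
  ext i j
  simp only [coe_mul, coe_neg, coe_translation, coe_xSL, coe_ySL, coe_zSL, mul_fin_two]
  fin_cases i <;> fin_cases j <;> simp <;> field_simp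
  · linear_combination ω_pow_three
  · linear_combination ω * ω_pow_three + ω_sq
  · linear_combination ω_pow_three

def translations (G : Subgroup PSL2C) : AddSubgroup ℂ where
  carrier := {t | pr (translation t) ∈ G}
  add_mem' {a b} (ha : pr (translation a) ∈ G) (hb : pr (translation b) ∈ G) := by
    show pr (translation (a + b)) ∈ G
    rw [translation, transvection_add, map_mul]
    exact mul_mem ha hb
  zero_mem' := by simp [translation, one_mem]
  neg_mem' {a} (ha : pr (translation a) ∈ G) := by
    show pr (translation (-a)) ∈ G
    rw [translation, ← transvection_inv, map_inv]
    exact inv_mem ha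

lemma mem_translations {G : Subgroup PSL2C} {t : ℂ} :
    t ∈ translations G ↔ pr (translation t) ∈ G :=
  Iff.rfl

lemma x_mem_Γ₃ : x ∈ Γ₃ := Subgroup.subset_closure (by simp)

lemma y_mem_Γ₃ : y ∈ Γ₃ := Subgroup.subset_closure (by simp)

lemma z_mem_Γ₃ : z ∈ Γ₃ := Subgroup.subset_closure (by simp)

lemma one_mem_translations_Γ₃ : (1 : ℂ) ∈ translations Γ₃ := by
  rw [mem_translations, ← pr_neg, ← xSL_mul_ySL_mul_zSL_mul_ySL]
  simp only [map_mul]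
  exact mul_mem (mul_mem (mul_mem x_mem_Γ₃ y_mem_Γ₃) z_mem_Γ₃) y_mem_Γ₃

lemma ω_mem_translations_Γ₃ : ω ∈ translations Γ₃ := by
  rw [mem_translations, ← pr_neg, ← xSL_mul_zSL_mul_xSL_mul_ySL]
  simp only [map_mul]
  exact mul_mem (mul_mem (mul_mem x_mem_Γ₃ z_mem_Γ₃) x_mem_Γ₃) y_mem_Γ₃

/-- Every parabolic `[[1, n+mω],[0,1]]` lies in `Γ(5,2,2,3,3,3)`. -/
theorem stmt9 (n m : ℤ) :
    pr ⟨!![1, (n : ℂ) + (m : ℂ) * ω; 0, 1], by simp [Matrix.det_fin_two_of]⟩ ∈ Γ₃ := by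
  have hmem : (n : ℂ) + m * ω ∈ translations Γ₃ := by
    simpa only [zsmul_eq_mul, mul_one] using
      add_mem (zsmul_mem one_mem_translations_Γ₃ n) (zsmul_mem ω_mem_translations_Γ₃ m)
  rwa [mk_eq_translation, ← mem_translations]
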